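/- Let b ∈ ℝ, T > 0, α, K ∈ ℝ, and let κ be an n×n real matrix with trace zero. Let w : (0,T) × B → ℝ be continuously differentiable in t and twice continuously differentiable in m, and set f(t,m) = w(t,m) ρ(m)^{b/2−α} e^{Kt} and c(m) = −K ρ(m)² + α[ n b + (2α + 2 − n − b)‖m‖² ] + (b − 2α) ρ(m)(m·κm). Then at every (t,m) ∈ (0,T) × B, e^{−Kt} ρ(m)^{α − b/2 + 2} [ ∂_t f + ∇·((κm) f) − (1/2)∇·((b m/ρ) f) − (1/2)Δf ] = ρ² ∂_t w − (1/2) ρ² Δw − ρ [ ((4α − b)/2) m − ρ κm ] · ∇w − c(m) w. In particular, f solves the Fokker–Planck equation on (0,T)×B if and only if w solves the transformed equation ρ²∂_t w − (1/2)ρ²Δw − ρ[((4α−b)/2)m − ρκm]·∇w − c(m)w = 0 there. -/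

import Mathlib

open MeasureTheory
open scoped RealInnerProductSpace

/-- The divergence of a vector field on Euclidean space. -/
noncomputable def vdiv {n : ℕ}
    (F : EuclideanSpace ℝ (Fin n) → EuclideanSpace ℝ (Fin n))
    (m : EuclideanSpace ℝ (Fin n)) : ℝ :=
  ∑ i, ⟪fderiv ℝ F m (EuclideanSpace.single i 1), EuclideanSpace.single i 1⟫

/-- The Laplacian of a scalar field on Euclidean space. -/
noncomputable def lap {n : ℕ}
    (g : EuclideanSpace ℝ (Fin n) → ℝ) (m : EuclideanSpace ℝ (Fin n)) : ℝ :=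
  vdiv (gradient g) m

/-!
Write `ρ = b - ‖m‖²`, `β = b/2 - α` and `f = w ρ^β e^{Kt}`. Since `∇ρ^γ = -2γρ^{γ-1} m`, the product
rules `∇·(a F) = ∇a·F + a ∇·F` and `Δ(uφ) = φΔu + 2∇u·∇φ + uΔφ` express every term of the
Fokker–Planck operator applied to `f` through `w`, `∇w`, `Δw` and powers `ρ^{β-k}`, `k ≤ 2`;
the drift `κm` contributes no zeroth-order term because `∇·(κm) = tr κ = 0`. Multiplying by
`e^{-Kt} ρ^{2-β}` clears all powers of `ρ` and leaves the transformed operator. The prefactor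
is positive on the ball, which gives the equivalence of the two equations.
-/

open Filter Topology

theorem eventually_sub_norm_sq_ne_zero {E : Type*} [SeminormedAddCommGroup E] {b : ℝ} {x : E}
    (hx : b - ‖x‖ ^ 2 ≠ 0) : ∀ᶠ y in 𝓝 x, b - ‖y‖ ^ 2 ≠ 0 :=
  (continuous_const.sub (continuous_norm.pow 2)).continuousAt.eventually_ne hx

theorem sub_norm_sq_pos_of_mem_ball {E : Type*} [SeminormedAddCommGroup E] {b : ℝ} {x : E}
    (hx : x ∈ Metric.ball 0 (Real.sqrt b)) : 0 < b - ‖x‖ ^ 2 :=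
  sub_pos.2 ((Real.lt_sqrt (norm_nonneg x)).1 (mem_ball_zero_iff.1 hx))

theorem deriv_mul_mul_exp {g : ℝ → ℝ} {t : ℝ} (hg : DifferentiableAt ℝ g t) (P K : ℝ) :
    deriv (fun s => g s * P * Real.exp (K * s)) t
      = (deriv g t + K * g t) * P * Real.exp (K * t) := by
  rw [((hg.hasDerivAt.mul_const P).fun_mul (hasDerivAt_const_mul K).exp).deriv]
  ring

section GradientCalculus

variable {F : Type*} [NormedAddCommGroup F] [InnerProductSpace ℝ F] [CompleteSpace F]
  {u v : F → ℝ} {gu gv x : F}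

theorem HasGradientAt.mul (hu : HasGradientAt u gu x) (hv : HasGradientAt v gv x) :
    HasGradientAt (fun y => u y * v y) (u x • gv + v x • gu) x := by
  rw [hasGradientAt_iff_hasFDerivAt] at *
  simpa using hu.fun_mul hv

theorem HasDerivAt.comp_hasGradientAt {h : ℝ → ℝ} {h' : ℝ} (hh : HasDerivAt h h' (u x))
    (hu : HasGradientAt u gu x) : HasGradientAt (fun y => h (u y)) (h' • gu) x := by
  rw [hasGradientAt_iff_hasFDerivAt] at *
  simpa [Function.comp_def, mul_comm] using hh.comp_hasFDerivAt x hu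

theorem hasGradientAt_norm_sq (x : F) : HasGradientAt (fun y => ‖y‖ ^ 2) (2 • x) x := by
  rw [hasGradientAt_iff_hasFDerivAt, map_nsmul]
  exact (hasStrictFDerivAt_norm_sq x).hasFDerivAt

theorem ContDiffAt.differentiableAt_gradient (hu : ContDiffAt ℝ 2 u x) :
    DifferentiableAt ℝ (gradient u) x :=
  (InnerProductSpace.toDual ℝ F).symm.differentiableAt.comp x
    ((hu.fderiv_right (m := 1) (by norm_num)).differentiableAt (by norm_num))

theorem hasGradientAt_mul_rpow_sub_norm_sq (C b γ : ℝ) (hx : b - ‖x‖ ^ 2 ≠ 0) :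
    HasGradientAt (fun y => C * (b - ‖y‖ ^ 2) ^ γ)
      ((-2 * γ * C * (b - ‖x‖ ^ 2) ^ (γ - 1)) • x) x := by
  have h := HasDerivAt.comp_hasGradientAt (u := fun y => ‖y‖ ^ 2)
    ((((hasDerivAt_id (‖x‖ ^ 2)).const_sub b).rpow_const (p := γ) (Or.inl hx)).const_mul C)
    (hasGradientAt_norm_sq x)
  convert h using 1
  · simp only [id]
  · rw [id, ← Nat.cast_smul_eq_nsmul ℝ, smul_smul]
    congr 1
    push_cast
    ring

theorem gradient_mul_rpow_sub_norm_sq_eventuallyEq (C b γ : ℝ) (hx : b - ‖x‖ ^ 2 ≠ 0) :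
    gradient (fun y => C * (b - ‖y‖ ^ 2) ^ γ) =ᶠ[𝓝 x]
      fun y => (-2 * γ * C * (b - ‖y‖ ^ 2) ^ (γ - 1)) • y := by
  filter_upwards [eventually_sub_norm_sq_ne_zero hx] with y hy
  exact (hasGradientAt_mul_rpow_sub_norm_sq C b γ hy).gradient

end GradientCalculus

section Divergence

variable {n : ℕ} {m : EuclideanSpace ℝ (Fin n)}

theorem Filter.EventuallyEq.vdiv_eq {F G : EuclideanSpace ℝ (Fin n) → EuclideanSpace ℝ (Fin n)}
    (h : F =ᶠ[𝓝 m] G) : vdiv F m = vdiv G m := by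
  rw [vdiv, vdiv, h.fderiv_eq]

theorem vdiv_add {F G : EuclideanSpace ℝ (Fin n) → EuclideanSpace ℝ (Fin n)}
    (hF : DifferentiableAt ℝ F m) (hG : DifferentiableAt ℝ G m) :
    vdiv (fun x => F x + G x) m = vdiv F m + vdiv G m := by
  simp [vdiv, fderiv_fun_add hF hG, inner_add_left, Finset.sum_add_distrib]

theorem vdiv_smul {a : EuclideanSpace ℝ (Fin n) → ℝ}
    {F : EuclideanSpace ℝ (Fin n) → EuclideanSpace ℝ (Fin n)}
    (ha : DifferentiableAt ℝ a m) (hF : DifferentiableAt ℝ F m) :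
    vdiv (fun x => a x • F x) m = ⟪gradient a m, F m⟫ + a m * vdiv F m := by
  simp [vdiv, fderiv_fun_smul ha hF, inner_add_left, Finset.sum_add_distrib, Finset.mul_sum,
    ← inner_gradient_left, PiLp.inner_apply, add_comm, mul_comm]

theorem vdiv_id (m : EuclideanSpace ℝ (Fin n)) : vdiv (fun x => x) m = n := by
  simp [vdiv]

theorem vdiv_toEuclideanLin (κ : Matrix (Fin n) (Fin n) ℝ) (m : EuclideanSpace ℝ (Fin n)) :
    vdiv (fun x => Matrix.toEuclideanLin κ x) m = κ.trace := by
  rw [vdiv, show (fun x => Matrix.toEuclideanLin κ x) =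
    (Matrix.toEuclideanLin κ).toContinuousLinearMap from rfl, ContinuousLinearMap.fderiv]
  simp [EuclideanSpace.inner_single_right, Matrix.trace]

theorem vdiv_smul_toEuclideanLin {a : EuclideanSpace ℝ (Fin n) → ℝ} (ha : DifferentiableAt ℝ a m)
    (κ : Matrix (Fin n) (Fin n) ℝ) :
    vdiv (fun x => a x • Matrix.toEuclideanLin κ x) m
      = ⟪gradient a m, Matrix.toEuclideanLin κ m⟫ + a m * κ.trace := by
  rw [vdiv_smul (F := fun x => Matrix.toEuclideanLin κ x) ha
    (Matrix.toEuclideanLin κ).toContinuousLinearMap.differentiableAt, vdiv_toEuclideanLin]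

theorem lap_mul {u φ : EuclideanSpace ℝ (Fin n) → ℝ}
    (hu : ∀ᶠ y in 𝓝 m, DifferentiableAt ℝ u y) (hφ : ∀ᶠ y in 𝓝 m, DifferentiableAt ℝ φ y)
    (hu' : DifferentiableAt ℝ (gradient u) m) (hφ' : DifferentiableAt ℝ (gradient φ) m) :
    lap (fun y => u y * φ y) m
      = φ m * lap u m + 2 * ⟪gradient u m, gradient φ m⟫ + u m * lap φ m := by
  have hgrad : gradient (fun y => u y * φ y) =ᶠ[𝓝 m]
      fun y => u y • gradient φ y + φ y • gradient u y := by
    filter_upwards [hu, hφ] with y huy hφy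
    exact (huy.hasGradientAt.mul hφy.hasGradientAt).gradient
  rw [lap, hgrad.vdiv_eq, vdiv_add (hu.self_of_nhds.fun_smul hφ') (hφ.self_of_nhds.fun_smul hu'),
    vdiv_smul hu.self_of_nhds hφ', vdiv_smul hφ.self_of_nhds hu', lap, lap,
    real_inner_comm (gradient φ m)]
  ring

theorem lap_mul_rpow_sub_norm_sq (C b γ : ℝ) (hm : b - ‖m‖ ^ 2 ≠ 0) :
    lap (fun y => C * (b - ‖y‖ ^ 2) ^ γ) m
      = 4 * γ * (γ - 1) * C * (b - ‖m‖ ^ 2) ^ (γ - 1 - 1) * ‖m‖ ^ 2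
        - 2 * n * γ * C * (b - ‖m‖ ^ 2) ^ (γ - 1) := by
  have hcoeff := hasGradientAt_mul_rpow_sub_norm_sq (-2 * γ * C) b (γ - 1) hm
  rw [lap, (gradient_mul_rpow_sub_norm_sq_eventuallyEq C b γ hm).vdiv_eq,
    vdiv_smul hcoeff.differentiableAt differentiableAt_fun_id, hcoeff.gradient, vdiv_id,
    real_inner_smul_left, real_inner_self_eq_norm_sq]
  ring

theorem lap_mul_mul_rpow_sub_norm_sq {u : EuclideanSpace ℝ (Fin n) → ℝ} (hu : ContDiffAt ℝ 2 u m)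
    (C b γ : ℝ) (hm : b - ‖m‖ ^ 2 ≠ 0) :
    lap (fun y => u y * (C * (b - ‖y‖ ^ 2) ^ γ)) m
      = C * (b - ‖m‖ ^ 2) ^ γ * lap u m
        - 4 * γ * C * (b - ‖m‖ ^ 2) ^ (γ - 1) * ⟪gradient u m, m⟫
        + u m * (4 * γ * (γ - 1) * C * (b - ‖m‖ ^ 2) ^ (γ - 1 - 1) * ‖m‖ ^ 2
          - 2 * n * γ * C * (b - ‖m‖ ^ 2) ^ (γ - 1)) := by
  have hud : ∀ᶠ y in 𝓝 m, DifferentiableAt ℝ u y :=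
    (hu.eventually (by simp)).mono fun y hy => hy.differentiableAt (by norm_num)
  have hweight : ∀ᶠ y in 𝓝 m, HasGradientAt (fun y => C * (b - ‖y‖ ^ 2) ^ γ)
      ((-2 * γ * C * (b - ‖y‖ ^ 2) ^ (γ - 1)) • y) y := by
    filter_upwards [eventually_sub_norm_sq_ne_zero hm] with y hy using hasGradientAt_mul_rpow_sub_norm_sq C b γ hy
  have hweight' : DifferentiableAt ℝ (gradient fun y => C * (b - ‖y‖ ^ 2) ^ γ) m :=
    ((hasGradientAt_mul_rpow_sub_norm_sq (-2 * γ * C) b (γ - 1) hm).differentiableAt.smul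
      differentiableAt_fun_id).congr_of_eventuallyEq
      (gradient_mul_rpow_sub_norm_sq_eventuallyEq C b γ hm)
  rw [lap_mul hud (hweight.mono fun y hy => hy.differentiableAt) hu.differentiableAt_gradient
    hweight', hweight.self_of_nhds.gradient, lap_mul_rpow_sub_norm_sq C b γ hm,
    real_inner_smul_right]
  ring

end Divergence

theorem fokker_planck_spatial_conjugation {n : ℕ} {m : EuclideanSpace ℝ (Fin n)}
    (κ : Matrix (Fin n) (Fin n) ℝ) (hκ : κ.trace = 0) (b α C : ℝ)
    {u : EuclideanSpace ℝ (Fin n) → ℝ} (hu : ContDiffAt ℝ 2 u m) (hm : 0 < b - ‖m‖ ^ 2) :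
    vdiv (fun x => (u x * (b - ‖x‖ ^ 2) ^ (b / 2 - α) * C) • Matrix.toEuclideanLin κ x) m
        - (1 / 2) * vdiv (fun x =>
            (b * (u x * (b - ‖x‖ ^ 2) ^ (b / 2 - α) * C) / (b - ‖x‖ ^ 2)) • x) m
        - (1 / 2) * lap (fun x => u x * (b - ‖x‖ ^ 2) ^ (b / 2 - α) * C) m
      = C * (b - ‖m‖ ^ 2) ^ (b / 2 - α - 2) * (-(1 / 2) * (b - ‖m‖ ^ 2) ^ 2 * lap u m
          - (b - ‖m‖ ^ 2) * ⟪((4 * α - b) / 2) • m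
              - (b - ‖m‖ ^ 2) • Matrix.toEuclideanLin κ m, gradient u m⟫
          - (α * (n * b + (2 * α + 2 - n - b) * ‖m‖ ^ 2)
              + (b - 2 * α) * (b - ‖m‖ ^ 2) * ⟪m, Matrix.toEuclideanLin κ m⟫) * u m) := by
  set β := b / 2 - α
  have hm0 : b - ‖m‖ ^ 2 ≠ 0 := hm.ne'
  have hum : HasGradientAt u (gradient u m) m :=
    (hu.differentiableAt (by norm_num)).hasGradientAt
  have hf : ∀ x, u x * (b - ‖x‖ ^ 2) ^ β * C = u x * (C * (b - ‖x‖ ^ 2) ^ β) := fun x => by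
    ring
  have hfρ : (fun x => (b * (u x * (C * (b - ‖x‖ ^ 2) ^ β)) / (b - ‖x‖ ^ 2)) • x) =ᶠ[𝓝 m]
      fun x => (u x * (b * C * (b - ‖x‖ ^ 2) ^ (β - 1))) • x := by
    filter_upwards [eventually_sub_norm_sq_ne_zero hm0] with x hx
    rw [Real.rpow_sub_one hx]
    congr 1
    field_simp
  have hgf := hum.mul (hasGradientAt_mul_rpow_sub_norm_sq C b β hm0)
  have hgfρ := hum.mul (hasGradientAt_mul_rpow_sub_norm_sq (b * C) b (β - 1) hm0)
  simp only [hf]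
  rw [vdiv_smul_toEuclideanLin hgf.differentiableAt, hκ, hgf.gradient, hfρ.vdiv_eq,
    vdiv_smul hgfρ.differentiableAt differentiableAt_fun_id, hgfρ.gradient, vdiv_id,
    lap_mul_mul_rpow_sub_norm_sq hu C b β hm0, Real.rpow_sub hm β 2, Real.rpow_two]
  simp only [Real.rpow_sub_one hm0, inner_add_left, inner_sub_left, inner_add_right,
    real_inner_smul_left, real_inner_smul_right, real_inner_self_eq_norm_sq,
    real_inner_comm m, real_inner_comm (gradient u m) (Matrix.toEuclideanLin κ m)]
  field_simp
  ring

theorem fokker_planck_conjugation {n : ℕ} (κ : Matrix (Fin n) (Fin n) ℝ) (hκ : κ.trace = 0)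
    (b α K : ℝ) {w : ℝ → EuclideanSpace ℝ (Fin n) → ℝ} {t : ℝ} {m : EuclideanSpace ℝ (Fin n)}
    (hwt : DifferentiableAt ℝ (fun s => w s m) t) (hwm : ContDiffAt ℝ 2 (w t) m)
    (hm : 0 < b - ‖m‖ ^ 2) :
    Real.exp (-(K * t)) * (b - ‖m‖ ^ 2) ^ (α - b / 2 + 2) *
        (deriv (fun s => w s m * (b - ‖m‖ ^ 2) ^ (b / 2 - α) * Real.exp (K * s)) t
          + vdiv (fun x => (w t x * (b - ‖x‖ ^ 2) ^ (b / 2 - α) * Real.exp (K * t))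
              • Matrix.toEuclideanLin κ x) m
          - (1 / 2) * vdiv (fun x => (b * (w t x * (b - ‖x‖ ^ 2) ^ (b / 2 - α)
              * Real.exp (K * t)) / (b - ‖x‖ ^ 2)) • x) m
          - (1 / 2) * lap (fun x => w t x * (b - ‖x‖ ^ 2) ^ (b / 2 - α) * Real.exp (K * t)) m)
      = (b - ‖m‖ ^ 2) ^ 2 * deriv (fun s => w s m) t
          - (1 / 2) * (b - ‖m‖ ^ 2) ^ 2 * lap (w t) m
          - (b - ‖m‖ ^ 2) *
              ⟪((4 * α - b) / 2) • m - (b - ‖m‖ ^ 2) • Matrix.toEuclideanLin κ m,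
                gradient (w t) m⟫
          - (-K * (b - ‖m‖ ^ 2) ^ 2
              + α * ((n : ℝ) * b + (2 * α + 2 - (n : ℝ) - b) * ‖m‖ ^ 2)
              + (b - 2 * α) * (b - ‖m‖ ^ 2) * ⟪m, Matrix.toEuclideanLin κ m⟫) * w t m := by
  have hρα := (Real.rpow_pos_of_pos hm α).ne'
  have hρb := (Real.rpow_pos_of_pos hm (b / 2)).ne'
  rw [deriv_mul_mul_exp hwt, add_sub_assoc, add_sub_assoc,
    fokker_planck_spatial_conjugation κ hκ b α _ hwm hm, Real.exp_neg]
  simp only [Real.rpow_add hm, Real.rpow_sub hm, Real.rpow_two]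
  field_simp
  ring

theorem fokker_planck_transformation_exp_general
    (n : ℕ) (b T α K : ℝ)
    (κ : Matrix (Fin n) (Fin n) ℝ) (hκ : Matrix.trace κ = 0)
    (w : ℝ → EuclideanSpace ℝ (Fin n) → ℝ)
    (hwt : ∀ m ∈ Metric.ball (0 : EuclideanSpace ℝ (Fin n)) (Real.sqrt b),
      ContDiffOn ℝ 1 (fun s => w s m) (Set.Ioo 0 T))
    (hwm : ∀ t ∈ Set.Ioo (0 : ℝ) T,
      ContDiffOn ℝ 2 (w t) (Metric.ball (0 : EuclideanSpace ℝ (Fin n)) (Real.sqrt b)))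
    (f : ℝ → EuclideanSpace ℝ (Fin n) → ℝ)
    (hf : ∀ s : ℝ, ∀ x : EuclideanSpace ℝ (Fin n),
      f s x = w s x * (b - ‖x‖ ^ 2) ^ (b / 2 - α) * Real.exp (K * s))
    (c : EuclideanSpace ℝ (Fin n) → ℝ)
    (hc : ∀ m : EuclideanSpace ℝ (Fin n),
      c m = -K * (b - ‖m‖ ^ 2) ^ 2
        + α * ((n : ℝ) * b + (2 * α + 2 - (n : ℝ) - b) * ‖m‖ ^ 2)
        + (b - 2 * α) * (b - ‖m‖ ^ 2) * ⟪m, Matrix.toEuclideanLin κ m⟫) :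
    (∀ t ∈ Set.Ioo (0 : ℝ) T,
      ∀ m ∈ Metric.ball (0 : EuclideanSpace ℝ (Fin n)) (Real.sqrt b),
        Real.exp (-(K * t)) * (b - ‖m‖ ^ 2) ^ (α - b / 2 + 2) *
            (deriv (fun s => f s m) t
              + vdiv (fun x => f t x • Matrix.toEuclideanLin κ x) m
              - (1 / 2) * vdiv (fun x => (b * f t x / (b - ‖x‖ ^ 2)) • x) m
              - (1 / 2) * lap (f t) m)
          = (b - ‖m‖ ^ 2) ^ 2 * deriv (fun s => w s m) t
              - (1 / 2) * (b - ‖m‖ ^ 2) ^ 2 * lap (w t) m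
              - (b - ‖m‖ ^ 2) *
                  ⟪((4 * α - b) / 2) • m - (b - ‖m‖ ^ 2) • Matrix.toEuclideanLin κ m,
                    gradient (w t) m⟫
              - c m * w t m) ∧
    ((∀ t ∈ Set.Ioo (0 : ℝ) T,
        ∀ m ∈ Metric.ball (0 : EuclideanSpace ℝ (Fin n)) (Real.sqrt b),
          deriv (fun s => f s m) t
              + vdiv (fun x => f t x • Matrix.toEuclideanLin κ x) m
            = (1 / 2) * vdiv (fun x => (b * f t x / (b - ‖x‖ ^ 2)) • x) m
              + (1 / 2) * lap (f t) m) ↔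
      (∀ t ∈ Set.Ioo (0 : ℝ) T,
        ∀ m ∈ Metric.ball (0 : EuclideanSpace ℝ (Fin n)) (Real.sqrt b),
          (b - ‖m‖ ^ 2) ^ 2 * deriv (fun s => w s m) t
              - (1 / 2) * (b - ‖m‖ ^ 2) ^ 2 * lap (w t) m
              - (b - ‖m‖ ^ 2) *
                  ⟪((4 * α - b) / 2) • m - (b - ‖m‖ ^ 2) • Matrix.toEuclideanLin κ m,
                    gradient (w t) m⟫
              - c m * w t m = 0)) := by
  obtain rfl : f = fun s x => w s x * (b - ‖x‖ ^ 2) ^ (b / 2 - α) * Real.exp (K * s) :=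
    funext₂ hf
  obtain rfl := funext hc
  have key := fun t (ht : t ∈ Set.Ioo 0 T) m (hm : m ∈ Metric.ball 0 (Real.sqrt b)) =>
    fokker_planck_conjugation κ hκ b α K
      (((hwt m hm).differentiableOn one_ne_zero).differentiableAt (isOpen_Ioo.mem_nhds ht))
      ((hwm t ht).contDiffAt (Metric.isOpen_ball.mem_nhds hm)) (sub_norm_sq_pos_of_mem_ball hm)
  refine ⟨key, forall₂_congr fun t ht => forall₂_congr fun m hm => ?_⟩
  rw [← key t ht m hm, mul_eq_zero_iff_left (mul_pos (Real.exp_pos _)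
    (Real.rpow_pos_of_pos (sub_norm_sq_pos_of_mem_ball hm) _)).ne', sub_sub, sub_eq_zero]

/-- Transformation identity for `f = w ρ^{b/2−α} e^{Kt}` with `ρ(m) = b − ‖m‖²`,
`κ` trace-free and
`c(m) = −Kρ² + α[nb + (2α+2−n−b)‖m‖²] + (b−2α)ρ(m·κm)`: on `(0,T)×B`,
`e^{−Kt} ρ^{α−b/2+2} [∂_t f + ∇·((κm)f) − (1/2)∇·((bm/ρ)f) − (1/2)Δf]
  = ρ²∂_t w − (1/2)ρ²Δw − ρ[((4α−b)/2)m − ρκm]·∇w − c w`;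
in particular `f` solves the Fokker–Planck equation iff `w` solves the transformed
equation. -/
theorem fokker_planck_transformation_exp
    (n : ℕ) (hn : 1 ≤ n) (b T α K : ℝ) (hT : 0 < T)
    (κ : Matrix (Fin n) (Fin n) ℝ) (hκ : Matrix.trace κ = 0)
    (w : ℝ → EuclideanSpace ℝ (Fin n) → ℝ)
    (hwt : ∀ m ∈ Metric.ball (0 : EuclideanSpace ℝ (Fin n)) (Real.sqrt b),
      ContDiffOn ℝ 1 (fun s => w s m) (Set.Ioo 0 T))
    (hwm : ∀ t ∈ Set.Ioo (0 : ℝ) T,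
      ContDiffOn ℝ 2 (w t) (Metric.ball (0 : EuclideanSpace ℝ (Fin n)) (Real.sqrt b)))
    (f : ℝ → EuclideanSpace ℝ (Fin n) → ℝ)
    (hf : ∀ s : ℝ, ∀ x : EuclideanSpace ℝ (Fin n),
      f s x = w s x * (b - ‖x‖ ^ 2) ^ (b / 2 - α) * Real.exp (K * s))
    (c : EuclideanSpace ℝ (Fin n) → ℝ)
    (hc : ∀ m : EuclideanSpace ℝ (Fin n),
      c m = -K * (b - ‖m‖ ^ 2) ^ 2
        + α * ((n : ℝ) * b + (2 * α + 2 - (n : ℝ) - b) * ‖m‖ ^ 2)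
        + (b - 2 * α) * (b - ‖m‖ ^ 2) * ⟪m, Matrix.toEuclideanLin κ m⟫) :
    (∀ t ∈ Set.Ioo (0 : ℝ) T,
      ∀ m ∈ Metric.ball (0 : EuclideanSpace ℝ (Fin n)) (Real.sqrt b),
        Real.exp (-(K * t)) * (b - ‖m‖ ^ 2) ^ (α - b / 2 + 2) *
            (deriv (fun s => f s m) t
              + vdiv (fun x => f t x • Matrix.toEuclideanLin κ x) m
              - (1 / 2) * vdiv (fun x => (b * f t x / (b - ‖x‖ ^ 2)) • x) m
              - (1 / 2) * lap (f t) m)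
          = (b - ‖m‖ ^ 2) ^ 2 * deriv (fun s => w s m) t
              - (1 / 2) * (b - ‖m‖ ^ 2) ^ 2 * lap (w t) m
              - (b - ‖m‖ ^ 2) *
                  ⟪((4 * α - b) / 2) • m - (b - ‖m‖ ^ 2) • Matrix.toEuclideanLin κ m,
                    gradient (w t) m⟫
              - c m * w t m) ∧
    ((∀ t ∈ Set.Ioo (0 : ℝ) T,
        ∀ m ∈ Metric.ball (0 : EuclideanSpace ℝ (Fin n)) (Real.sqrt b),
          deriv (fun s => f s m) t
              + vdiv (fun x => f t x • Matrix.toEuclideanLin κ x) m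
            = (1 / 2) * vdiv (fun x => (b * f t x / (b - ‖x‖ ^ 2)) • x) m
              + (1 / 2) * lap (f t) m) ↔
      (∀ t ∈ Set.Ioo (0 : ℝ) T,
        ∀ m ∈ Metric.ball (0 : EuclideanSpace ℝ (Fin n)) (Real.sqrt b),
          (b - ‖m‖ ^ 2) ^ 2 * deriv (fun s => w s m) t
              - (1 / 2) * (b - ‖m‖ ^ 2) ^ 2 * lap (w t) m
              - (b - ‖m‖ ^ 2) *
                  ⟪((4 * α - b) / 2) • m - (b - ‖m‖ ^ 2) • Matrix.toEuclideanLin κ m,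
                    gradient (w t) m⟫
              - c m * w t m = 0)) :=
  fokker_planck_transformation_exp_general n b T α K κ hκ w hwt hwm f hf c hc
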